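/- Let t ≥ 2 and m ≥ 2 be integers, and let λ be a (t, mt−1)-core partition with distinct parts. Then β(λ) ⊆ {1, 2, …, mt−2}; in particular, n_i(λ) ≤ m for every 1 ≤ i ≤ t−2, n_{t−1}(λ) ≤ m−1, and n_i(λ)·n_{i+1}(λ) = 0 for every 1 ≤ i ≤ t−2. -/

import Mathlib

structure Partn where
  parts : List ℕ
  pos : ∀ p ∈ parts, 0 < p
  sorted : parts.Pairwise (· ≥ ·)

namespace Partn

/-- The size of a partition: the sum of its parts. -/
def size (l : Partn) : ℕ := l.parts.sum

/-- The number of rows `k` (0-indexed) with `λ_k ≥ j` (the length of column `j`). -/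
def colLen (l : Partn) (j : ℕ) : ℕ := (l.parts.filter (fun p => j ≤ p)).length

/-- The hook length of the box in row `i` (0-indexed) and column `j` (1-indexed):
`λ_i − j + #{k : λ_k ≥ j} − i + 1` (with 1-indexed rows). -/
def hook (l : Partn) (i j : ℕ) : ℕ :=
  (l.parts.getD i 0 - j) + (l.colLen j - (i + 1)) + 1

/-- A partition is a `t`-core if none of its hook lengths is divisible by `t`. -/
def IsCore (t : ℕ) (l : Partn) : Prop :=
  ∀ i j : ℕ, i < l.parts.length → 1 ≤ j → j ≤ l.parts.getD i 0 → ¬ (t ∣ l.hook i j)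

/-- A partition has distinct parts if its parts are strictly decreasing. -/
def DistinctParts (l : Partn) : Prop := l.parts.Pairwise (· > ·)

/-- The β-set of a partition: `{λ_i + ℓ − i : 1 ≤ i ≤ ℓ}` (1-indexed). -/
def betaSet (l : Partn) : Finset ℕ :=
  (Finset.range l.parts.length).image
    (fun i => l.parts.getD i 0 + (l.parts.length - 1 - i))

/-- `nFn t i l` is the number of elements of the β-set of `l` congruent to `i` mod `t`. -/
def nFn (t i : ℕ) (l : Partn) : ℕ :=
  (l.betaSet.filter (fun x => x % t = i)).card

end Partn

/-!
A `t`-core's β-set is closed under `x ↦ x - t` for `x ≥ t`: if `b = β_i - t` were a gap of the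
β-set, then `β_i - b = t` would be a hook length in row `i`. Distinct parts mean that the β-set
contains no two consecutive numbers, and it never contains `0`. So an element `x ≥ mt - 1` is
impossible: the β-set would contain both `x - mt` (by the `t`-core property) and `x - (mt - 1)`
(by the `(mt - 1)`-core property). Likewise `x mod t` lies in the β-set with `x`, so `n_i` and
`n_{i+1}` cannot both be positive, as `i` and `i + 1` would then lie in it. The bounds on the
`n_i` count residues below `mt - 1`.
-/

theorem Finset.card_filter_mod_eq_le {s : Finset ℕ} {n t r : ℕ} (hs : ∀ x ∈ s, x < n * t + r) :
    (s.filter (· % t = r)).card ≤ n := by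
  have hdiv : ∀ x ∈ s.filter (· % t = r), t * (x / t) + r = x := fun x hx => by
    rw [← (Finset.mem_filter.1 hx).2, Nat.div_add_mod]
  have hmaps : ∀ x ∈ s.filter (· % t = r), x / t ∈ Finset.range n := fun x hx => by
    have := hs x (Finset.mem_filter.1 hx).1
    have := hdiv x hx
    exact Finset.mem_range.2 (Nat.lt_of_mul_lt_mul_left (a := t) (by rw [mul_comm t n]; omega))
  simpa using Finset.card_le_card_of_injOn (· / t) (fun x hx => hmaps x hx)
    fun x hx y hy (hxy : x / t = y / t) => by rw [← hdiv x hx, ← hdiv y hy, hxy]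

namespace Partn

variable {l : Partn} {t m i j k b c x : ℕ}

def beta (l : Partn) (i : ℕ) : ℕ := l.parts.getD i 0 + (l.parts.length - 1 - i)

theorem mem_betaSet : x ∈ l.betaSet ↔ ∃ i < l.parts.length, l.beta i = x := by
  simp [betaSet, beta]

theorem one_le_getD (hi : i < l.parts.length) : 1 ≤ l.parts.getD i 0 := by
  rw [List.getD_eq_getElem _ _ hi]
  exact l.pos _ (List.getElem_mem hi)

theorem getD_le_getD (hik : i ≤ k) (hk : k < l.parts.length) :
    l.parts.getD k 0 ≤ l.parts.getD i 0 := by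
  rcases hik.eq_or_lt with rfl | hlt
  · rfl
  rw [List.getD_eq_getElem _ _ (hlt.trans hk), List.getD_eq_getElem _ _ hk]
  exact l.sorted.rel_get_of_lt (a := ⟨i, hlt.trans hk⟩) (b := ⟨k, hk⟩) hlt

theorem DistinctParts.getD_lt_getD (hd : l.DistinctParts) (hik : i < k)
    (hk : k < l.parts.length) : l.parts.getD k 0 < l.parts.getD i 0 := by
  rw [List.getD_eq_getElem _ _ (hik.trans hk), List.getD_eq_getElem _ _ hk]
  exact hd.rel_get_of_lt (a := ⟨i, hik.trans hk⟩) (b := ⟨k, hk⟩) hik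

theorem beta_add_sub_le (hik : i ≤ k) (hk : k < l.parts.length) :
    l.beta k + (k - i) ≤ l.beta i := by
  have := getD_le_getD hik hk
  unfold beta
  omega

theorem DistinctParts.beta_add_two_le (hd : l.DistinctParts) (hik : i < k)
    (hk : k < l.parts.length) : l.beta k + 2 ≤ l.beta i := by
  have := beta_add_sub_le (i := i + 1) hik hk
  have := hd.getD_lt_getD (Nat.lt_add_one i) ((Nat.succ_le_of_lt hik).trans_lt hk)
  unfold beta at *
  omega

theorem pos_of_mem_betaSet (hx : x ∈ l.betaSet) : 0 < x := by
  obtain ⟨i, hi, rfl⟩ := mem_betaSet.1 hx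
  have := one_le_getD hi
  unfold beta
  omega

theorem DistinctParts.add_one_notMem_betaSet (hd : l.DistinctParts) (hx : x ∈ l.betaSet) :
    x + 1 ∉ l.betaSet := by
  intro hx1
  obtain ⟨k, hk, rfl⟩ := mem_betaSet.1 hx
  obtain ⟨i, hi, hik⟩ := mem_betaSet.1 hx1
  rcases lt_trichotomy i k with h | rfl | h
  · have := hd.beta_add_two_le h hk
    omega
  · omega
  · have := beta_add_sub_le h.le hi
    omega

theorem colLen_eq (hc : c ≤ l.parts.length) (hhead : ∀ k < c, j ≤ l.parts.getD k 0)
    (htail : ∀ k, c ≤ k → k < l.parts.length → l.parts.getD k 0 < j) : l.colLen j = c := by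
  rw [colLen, ← List.take_append_drop c l.parts, List.filter_append, List.length_append,
    List.filter_eq_self.2, List.filter_eq_nil_iff.2, List.length_take, List.length_nil]
  · omega
  · intro a ha
    obtain ⟨k, hk, rfl⟩ := List.mem_drop_iff_getElem.1 ha
    have := htail (c + k) (by omega) (by omega)
    rw [List.getD_eq_getElem _ _ (by omega)] at this
    simpa using this
  · intro a ha
    obtain ⟨k, hk, rfl⟩ := List.mem_take_iff_getElem.1 ha
    have := hhead k (by omega)
    rw [List.getD_eq_getElem _ _ (by omega)] at this
    simpa using this

theorem le_getD_of_lt_beta (hk : k < c) (hc : c ≤ l.parts.length) (hb : b < l.beta (c - 1)) :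
    b + 1 + c - l.parts.length ≤ l.parts.getD k 0 := by
  have := beta_add_sub_le (l := l) (Nat.le_sub_one_of_lt hk) (by omega)
  unfold beta at *
  omega

theorem getD_lt_of_beta_lt (hck : c ≤ k) (hk : k < l.parts.length) (hb : l.beta c < b) :
    l.parts.getD k 0 < b + 1 + c - l.parts.length := by
  have := beta_add_sub_le hck hk
  unfold beta at *
  omega

theorem hook_eq_beta_sub (hcℓ : c ≤ l.parts.length) (hic : i < c)
    (hhead : ∀ k < c, b < l.beta k) (htail : c < l.parts.length → l.beta c < b) :
    1 ≤ b + 1 + c - l.parts.length ∧ b + 1 + c - l.parts.length ≤ l.parts.getD i 0 ∧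
      l.hook i (b + 1 + c - l.parts.length) = l.beta i - b := by
  have hcol : l.colLen (b + 1 + c - l.parts.length) = c :=
    colLen_eq hcℓ (fun k hk => le_getD_of_lt_beta hk hcℓ (hhead _ (by omega)))
      (fun k hck hk => getD_lt_of_beta_lt hck hk (htail (by omega)))
  have hj : b + 1 + c - l.parts.length ≤ l.parts.getD i 0 :=
    le_getD_of_lt_beta hic hcℓ (hhead _ (by omega))
  have hj1 : 1 ≤ b + 1 + c - l.parts.length := by
    rcases hcℓ.eq_or_lt with h | h
    · omega
    · have := getD_lt_of_beta_lt (k := l.parts.length - 1) (by omega) (by omega) (htail h)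
      have := one_le_getD (l := l) (i := l.parts.length - 1) (by omega)
      omega
  refine ⟨hj1, hj, ?_⟩
  rw [hook, hcol]
  have := hhead i hic
  unfold beta at *
  omega

theorem exists_hook_eq_beta_sub (hi : i < l.parts.length) (hb : b < l.beta i)
    (hbn : b ∉ l.betaSet) :
    ∃ j, 1 ≤ j ∧ j ≤ l.parts.getD i 0 ∧ l.hook i j = l.beta i - b := by
  -- the rows whose β-number exceeds `b` are the first `c` ones
  have hex : ∃ c, l.parts.length ≤ c ∨ l.beta c < b := ⟨_, .inl le_rfl⟩
  have hfind : ∃ c, (l.parts.length ≤ c ∨ l.beta c < b) ∧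
      ∀ k < c, ¬(l.parts.length ≤ k ∨ l.beta k < b) :=
    ⟨Nat.find hex, Nat.find_spec hex, fun _ => Nat.find_min hex⟩
  obtain ⟨c, hc_spec, hc_min⟩ := hfind
  have hcℓ : c ≤ l.parts.length := by
    by_contra! h
    exact hc_min _ h (.inl le_rfl)
  have hhead : ∀ k < c, b < l.beta k := fun k hk => by
    obtain ⟨hkℓ, hbk⟩ := not_or.1 (hc_min k hk)
    exact (not_lt.1 hbk).lt_of_ne fun h => hbn (mem_betaSet.2 ⟨k, not_le.1 hkℓ, h.symm⟩)
  have htail : c < l.parts.length → l.beta c < b := fun h => hc_spec.resolve_left (not_le.2 h)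
  have hic : i < c := by
    by_contra! h
    have := beta_add_sub_le h hi
    have := htail (by omega)
    omega
  exact ⟨_, hook_eq_beta_sub hcℓ hic hhead htail⟩

theorem IsCore.sub_mem_betaSet (hc : l.IsCore t) (hx : x ∈ l.betaSet) (htx : t ≤ x) :
    x - t ∈ l.betaSet := by
  rcases Nat.eq_zero_or_pos t with rfl | ht
  · simpa using hx
  by_contra hgap
  obtain ⟨i, hi, rfl⟩ := mem_betaSet.1 hx
  obtain ⟨j, hj1, hjle, hhook⟩ := exists_hook_eq_beta_sub hi (by omega) hgap
  exact hc i j hi hj1 hjle ⟨1, by rw [hhook]; omega⟩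

theorem IsCore.sub_mul_mem_betaSet (hc : l.IsCore t) (hx : x ∈ l.betaSet) :
    ∀ k, k * t ≤ x → x - k * t ∈ l.betaSet
  | 0, _ => by simpa using hx
  | k + 1, hk => by
    have hk' : k * t ≤ x := (Nat.mul_le_mul_right t k.le_succ).trans hk
    have h := hc.sub_mem_betaSet (hc.sub_mul_mem_betaSet hx k hk')
      (by rw [Nat.add_one_mul] at hk; omega)
    rwa [Nat.sub_sub, ← Nat.add_one_mul] at h

theorem IsCore.mod_mem_betaSet (hc : l.IsCore t) (hx : x ∈ l.betaSet) : x % t ∈ l.betaSet := by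
  rw [Nat.mod_eq_sub_div_mul]
  exact hc.sub_mul_mem_betaSet hx _ (Nat.div_mul_le_self x t)

theorem IsCore.mem_betaSet_of_nFn_ne_zero (hc : l.IsCore t) (h : nFn t i l ≠ 0) :
    i ∈ l.betaSet := by
  obtain ⟨x, hx⟩ := Finset.card_ne_zero.1 h
  obtain ⟨hxβ, rfl⟩ := Finset.mem_filter.1 hx
  exact hc.mod_mem_betaSet hxβ

theorem DistinctParts.lt_mul_sub_one_of_mem_betaSet (hd : l.DistinctParts) (hct : l.IsCore t)
    (hcmt : l.IsCore (m * t - 1)) (hmt : 0 < m * t) (hx : x ∈ l.betaSet) : x < m * t - 1 := by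
  by_contra! hle
  have hy := hcmt.sub_mem_betaSet hx hle
  have := pos_of_mem_betaSet hy
  have hz := hct.sub_mul_mem_betaSet hx m (by omega)
  exact hd.add_one_notMem_betaSet hz (by convert hy using 1; omega)

end Partn

/-- The β-set of a `(t, mt−1)`-core partition with distinct parts lies in `{1, …, mt−2}`. -/
theorem betaSet_subset_t_mt_sub_one (t m : ℕ) (ht : 2 ≤ t) (hm : 2 ≤ m) (lam : Partn)
    (hlam : (lam.IsCore t ∧ lam.IsCore (m * t - 1) ∧ lam.DistinctParts)) :
    lam.betaSet ⊆ Finset.Icc 1 (m * t - 2) ∧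
      (∀ i : ℕ, 1 ≤ i → i ≤ t - 2 → Partn.nFn t i lam ≤ m) ∧
      Partn.nFn t (t - 1) lam ≤ m - 1 ∧
      ∀ i : ℕ, 1 ≤ i → i ≤ t - 2 → Partn.nFn t i lam * Partn.nFn t (i + 1) lam = 0 := by
  obtain ⟨hct, hcmt, hd⟩ := hlam
  have hlt : ∀ x ∈ lam.betaSet, x < m * t - 1 := fun x hx =>
    hd.lt_mul_sub_one_of_mem_betaSet hct hcmt (Nat.mul_pos (by omega) (by omega)) hx
  have htm : t ≤ m * t := Nat.le_mul_of_pos_left t (by omega)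
  refine ⟨fun x hx => ?_, fun i _ _ => ?_, ?_, fun i _ _ => ?_⟩
  · have := hlt x hx
    exact Finset.mem_Icc.2 ⟨Partn.pos_of_mem_betaSet hx, by omega⟩
  · exact Finset.card_filter_mod_eq_le fun x hx => (hlt x hx).trans_le (by omega)
  · refine Finset.card_filter_mod_eq_le fun x hx => (hlt x hx).trans_le ?_
    rw [Nat.sub_one_mul]
    omega
  · by_contra hne
    obtain ⟨hi, hi1⟩ := mul_ne_zero_iff.1 hne
    exact hd.add_one_notMem_betaSet (hct.mem_betaSet_of_nFn_ne_zero hi)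
      (hct.mem_betaSet_of_nFn_ne_zero hi1)
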